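/- arXiv:2508.09379 — 4 statements merged into one kernel-verified Lean document; each statement's English description precedes it below -/
import Mathlib

section
/- Let R be a commutative ring, A an Azumaya algebra over R, and M an R-module. Then the R-linear map M → A ⊗[R] M given by m ↦ 1 ⊗ m is injective, and its image is exactly the centralizer Z(A ⊗[R] M) = {x ∈ A ⊗[R] M : a·x = x·a for all a ∈ A}. In particular Z(A ⊗[R] M) ≅ M as R-modules. -/
open TensorProduct MulOpposite

/-- The canonical map `A ⊗[R] Aᵐᵒᵖ → End_R(A)`, sending `a ⊗ b` to `x ↦ a * x * b.unop`. -/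
noncomputable def mulLeftRight (R A : Type*) [CommRing R] [Ring A] [Algebra R A] :
    A ⊗[R] Aᵐᵒᵖ →ₗ[R] (A →ₗ[R] A) :=
  TensorProduct.lift <| LinearMap.mk₂ R
    (fun a b => (LinearMap.mulLeft R a).comp (LinearMap.mulRight R b.unop))
    (fun a₁ a₂ b => by ext x; simp [add_mul])
    (fun r a b => by ext x; simp [smul_mul_assoc])
    (fun a b₁ b₂ => by ext x; simp [mul_add])
    (fun r a b => by ext x; simp [mul_smul_comm])

/-- `A` is an Azumaya algebra over the commutative ring `R`: it is a faithful finitely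
generated projective `R`-module and `A ⊗[R] Aᵐᵒᵖ → End_R(A)`, `a ⊗ b ↦ (x ↦ a·x·b)`,
is bijective. -/
structure IsAzumayaAlg (R A : Type*) [CommRing R] [Ring A] [Algebra R A] : Prop where
  finite : Module.Finite R A
  projective : Module.Projective R A
  faithful : FaithfulSMul R A
  bij : Function.Bijective (mulLeftRight R A)


/-!
Since `A` is faithful, finitely generated and projective, the ideal `{f 1 | f : A →ₗ[R] R}`
contains every `f a = (f ∘ (a * ·)) 1`, so by the dual basis lemma it extends to all of `A`, and
Nakayama's lemma together with faithfulness make it all of `R`: there is `t : A →ₗ[R] R` with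
`t 1 = 1`. By the Azumaya condition, `c ↦ t c • 1` is the action `c ↦ ∑ aᵢ c bᵢ` of some
`e = ∑ aᵢ ⊗ bᵢ`. On `A ⊗[R] M` the action of `e` is `1 ⊗ ψ`, where `ψ (c ⊗ m) = t c • m`,
while on a central element `x` it is multiplication by `∑ aᵢ bᵢ = t 1 • 1 = 1`. Hence every
central `x` equals `1 ⊗ ψ x`, and `ψ` is a left inverse of `m ↦ 1 ⊗ m`.
-/

theorem Ideal.eq_top_of_smul_top_eq_top {R M : Type*} [CommRing R] [AddCommGroup M] [Module R M]
    [Module.Finite R M] [FaithfulSMul R M] {I : Ideal R} (h : I • (⊤ : Submodule R M) = ⊤) :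
    I = ⊤ := by
  obtain ⟨r, hr1, hr0⟩ := Submodule.exists_sub_one_mem_and_smul_eq_zero_of_fg_of_le_smul I ⊤
    Module.Finite.fg_top h.ge
  have hr : r = 0 := eq_of_smul_eq_smul fun x : M => by rw [hr0 x trivial, zero_smul]
  rw [Ideal.eq_top_iff_one]
  simpa [hr] using I.neg_mem hr1

theorem Module.Projective.mem_range_eval_smul_top {R P : Type*} [CommRing R] [AddCommGroup P]
    [Module R P] [Module.Projective R P] (x : P) :
    x ∈ LinearMap.range (Module.Dual.eval R P x) • (⊤ : Submodule R P) := by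
  obtain ⟨s, hs⟩ := Module.projective_def'.1 ‹Module.Projective R P›
  have hx : Finsupp.linearCombination R id (s x) = x := congr($hs x)
  nth_rw 2 [← hx]
  rw [Finsupp.linearCombination_apply]
  refine Submodule.finsuppSum_mem _ _ _ _ fun a _ => ?_
  exact Submodule.smul_mem_smul ⟨Finsupp.lapply a ∘ₗ s, rfl⟩ trivial

theorem Algebra.exists_linearMap_apply_one_eq_one (R A : Type*) [CommRing R] [Ring A]
    [Algebra R A] [Module.Finite R A] [Module.Projective R A] [FaithfulSMul R A] :
    ∃ t : A →ₗ[R] R, t 1 = 1 := by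
  suffices h : LinearMap.range (Module.Dual.eval R A 1) = ⊤ by
    obtain ⟨t, ht⟩ := h ▸ Submodule.mem_top (x := (1 : R))
    exact ⟨t, ht⟩
  refine Ideal.eq_top_of_smul_top_eq_top (M := A) (Submodule.eq_top_iff'.2 fun a => ?_)
  have hle :
      LinearMap.range (Module.Dual.eval R A a) ≤ LinearMap.range (Module.Dual.eval R A 1) := by
    rintro _ ⟨f, rfl⟩
    exact ⟨f ∘ₗ LinearMap.mulLeft R a, by simp⟩
  exact Submodule.smul_mono_left hle (Module.Projective.mem_range_eval_smul_top a)

section Bimodule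

variable (R A N : Type*) [CommRing R] [Ring A] [Algebra R A] [AddCommGroup N] [Module R N]
  [Module A N] [Module Aᵐᵒᵖ N] [IsScalarTower R A N] [IsScalarTower R Aᵐᵒᵖ N]

noncomputable def bimoduleAction : A ⊗[R] Aᵐᵒᵖ →ₗ[R] Module.End R N :=
  lift <| (LinearMap.mul R (Module.End R N)).compl₁₂
    (Algebra.lsmul R R N).toLinearMap (Algebra.lsmul R R N).toLinearMap

@[simp]
lemma bimoduleAction_tmul (a : A) (b : Aᵐᵒᵖ) (x : N) :
    bimoduleAction R A N (a ⊗ₜ b) x = a • b • x := rfl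

variable {R A N}

lemma bimoduleAction_apply_of_forall_smul_eq (u : A ⊗[R] Aᵐᵒᵖ) {x : N}
    (hx : ∀ a : A, a • x = op a • x) :
    bimoduleAction R A N u x = mulLeftRight R A u 1 • x := by
  induction u using TensorProduct.induction_on with
  | zero => simp
  | tmul a b =>
    rw [bimoduleAction_tmul, ← op_unop b, ← hx, smul_smul]
    simp [mulLeftRight]
  | add u v hu hv => simp [hu, hv, add_smul]

end Bimodule

lemma bimoduleAction_tmul_tmul {R A : Type*} [CommRing R] [Ring A] [Algebra R A]
    (M : Type*) [AddCommGroup M] [Module R M] (u : A ⊗[R] Aᵐᵒᵖ) (c : A) (m : M) :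
    bimoduleAction R A (A ⊗[R] M) u (c ⊗ₜ m) = mulLeftRight R A u c ⊗ₜ m := by
  induction u using TensorProduct.induction_on with
  | zero => simp
  | tmul a b => simp [mulLeftRight, smul_tmul']
  | add u v hu hv => simp [hu, hv, add_tmul]

/-- The map `M → A ⊗[R] M`, `m ↦ 1 ⊗ m` is injective with image exactly the
centralizer `Z(A ⊗[R] M) = {x | a • x = x • a for all a ∈ A}` of `A` in the
`A`-bimodule `A ⊗[R] M`; in particular `Z(A ⊗[R] M) ≅ M`. -/
theorem stmt0 (R : Type*) [CommRing R] (A : Type*) [Ring A] [Algebra R A]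
    (hA : IsAzumayaAlg R A) (M : Type*) [AddCommGroup M] [Module R M] :
    Function.Injective (fun m : M => (1 : A) ⊗ₜ[R] m) ∧
      Set.range (fun m : M => (1 : A) ⊗ₜ[R] m) =
        {x : A ⊗[R] M | ∀ a : A, a • x = op a • x} := by
  have := hA.finite
  have := hA.projective
  have := hA.faithful
  obtain ⟨t, ht⟩ := Algebra.exists_linearMap_apply_one_eq_one R A
  obtain ⟨e, he⟩ := hA.bij.2 (Algebra.linearMap R A ∘ₗ t)
  let ψ : A ⊗[R] M →ₗ[R] M := lift (LinearMap.lsmul R M ∘ₗ t)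
  have hψ (m : M) : ψ (1 ⊗ₜ m) = m := by simp [ψ, ht]
  have he_eq (x : A ⊗[R] M) : bimoduleAction R A (A ⊗[R] M) e x = 1 ⊗ₜ ψ x := by
    induction x using TensorProduct.induction_on with
    | zero => simp
    | tmul c m => simp [bimoduleAction_tmul_tmul, he, ψ, Algebra.algebraMap_eq_smul_one, smul_tmul]
    | add x y hx hy => simp [hx, hy, tmul_add]
  refine ⟨Function.LeftInverse.injective hψ, Set.ext fun x => ⟨?_, fun hx => ⟨ψ x, ?_⟩⟩⟩
  · rintro ⟨m, rfl⟩ a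
    simp [smul_tmul']
  · show 1 ⊗ₜ ψ x = x
    rw [← he_eq, bimoduleAction_apply_of_forall_smul_eq e (Set.mem_ofPred.mp hx), he]
    simp [ht]
end

section
/- Let R be a commutative ring and A an Azumaya algebra over R. Then the unit map R → A (the algebra structure map r ↦ r·1) is an injective R-linear map whose cokernel A/R is a projective R-module; consequently R → A is a split injection of R-modules. -/
/-!
Let `J ⊆ R` be the ideal of values `f 1` of the functionals `f : A →ₗ[R] R`. Every value `f a`
lies in `J`, because `f a = (f ∘ (· * a)) 1`; expanding elements of the projective module `A`
along a dual basis then gives `A = J • A`. Since `A` is finitely generated and faithful,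
Nakayama's lemma forces `J = R`, so some functional sends `1` to `1` and splits `R → A`.
The cokernel is then a direct summand of the projective module `A`.
-/

open TensorProduct MulOpposite

open Module

theorem Module.Projective.top_le_smul_of_forall_dual_apply_mem {R M : Type*} [CommSemiring R]
    [AddCommMonoid M] [Module R M] [Projective R M] {I : Ideal R}
    (hI : ∀ (f : Dual R M) (m : M), f m ∈ I) : (⊤ : Submodule R M) ≤ I • ⊤ := by
  obtain ⟨s, hs⟩ := projective_def'.mp ‹Projective R M›
  intro m _
  have hm : Finsupp.linearCombination R id (s m) = m := congr($hs m)
  rw [← hm, Finsupp.linearCombination_apply]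
  exact Submodule.sum_mem _ fun x _ =>
    Submodule.smul_mem_smul (hI (Finsupp.lapply x ∘ₗ s) m) trivial

theorem Ideal.eq_top_of_top_le_smul {R M : Type*} [CommRing R] [AddCommGroup M] [Module R M]
    [Module.Finite R M] [FaithfulSMul R M] {I : Ideal R} (h : (⊤ : Submodule R M) ≤ I • ⊤) :
    I = ⊤ := by
  obtain ⟨r, hr, hr0⟩ :=
    Submodule.exists_sub_one_mem_and_smul_eq_zero_of_fg_of_le_smul I ⊤ Module.Finite.fg_top h
  have hr_zero : r = 0 :=
    FaithfulSMul.eq_of_smul_eq_smul fun m : M => by rw [hr0 m trivial, zero_smul]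
  rw [hr_zero, zero_sub] at hr
  exact I.eq_top_of_isUnit_mem hr isUnit_one.neg

theorem Algebra.exists_dual_apply_one_eq_one (R A : Type*) [CommRing R] [Ring A] [Algebra R A]
    [Module.Finite R A] [Projective R A] [FaithfulSMul R A] : ∃ f : Dual R A, f 1 = 1 := by
  let J : Ideal R := LinearMap.range (LinearMap.applyₗ (1 : A))
  have hJ : ∀ (f : Dual R A) (a : A), f a ∈ J := fun f a =>
    ⟨f ∘ₗ LinearMap.mulRight R a, by simp⟩
  have hJ_top : J = ⊤ :=
    Ideal.eq_top_of_top_le_smul (M := A) (Projective.top_le_smul_of_forall_dual_apply_mem hJ)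
  obtain ⟨f, hf⟩ : (1 : R) ∈ J := hJ_top ▸ Submodule.mem_top
  exact ⟨f, hf⟩

theorem Algebra.exists_linearMap_comp_linearMap_eq_id (R A : Type*) [CommRing R] [Ring A]
    [Algebra R A] [Module.Finite R A] [Projective R A] [FaithfulSMul R A] :
    ∃ g : A →ₗ[R] R, g ∘ₗ Algebra.linearMap R A = LinearMap.id := by
  obtain ⟨f, hf⟩ := Algebra.exists_dual_apply_one_eq_one R A
  exact ⟨f, LinearMap.ext_ring (by simpa using hf)⟩

theorem Module.Projective.quotient_range_of_comp_eq_id {R M N : Type*} [Ring R]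
    [AddCommGroup M] [Module R M] [AddCommGroup N] [Module R N] [Projective R M]
    (i : N →ₗ[R] M) (r : M →ₗ[R] N) (h : r ∘ₗ i = LinearMap.id) :
    Projective R (M ⧸ LinearMap.range i) := by
  have hri : ∀ n, r (i n) = n := fun n => congr($h n)
  let p : M →ₗ[R] M := LinearMap.id - i ∘ₗ r
  have hker : LinearMap.range i ≤ LinearMap.ker p := by
    rintro _ ⟨n, rfl⟩
    simp [p, hri]
  refine .of_split ((LinearMap.range i).liftQ p hker) (LinearMap.range i).mkQ ?_
  ext m
  simp [p, Submodule.Quotient.mk_eq_zero]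

/-- For an Azumaya algebra `A` over `R`, the unit map `R → A`, `r ↦ r • 1`, is an injective
`R`-linear map whose cokernel `A/R` is a projective `R`-module; consequently it is a split
injection of `R`-modules. -/
theorem stmt1 (R : Type*) [CommRing R] (A : Type*) [Ring A] [Algebra R A]
    (hA : IsAzumayaAlg R A) :
    Function.Injective (Algebra.linearMap R A) ∧
      Module.Projective R (A ⧸ LinearMap.range (Algebra.linearMap R A)) ∧
      ∃ g : A →ₗ[R] R, g.comp (Algebra.linearMap R A) = LinearMap.id := by
  have := hA.finite
  have := hA.projective
  have := hA.faithful
  obtain ⟨g, hg⟩ := Algebra.exists_linearMap_comp_linearMap_eq_id R A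
  exact ⟨LinearMap.injective_of_comp_eq_id _ g hg,
    .quotient_range_of_comp_eq_id _ g hg, g, hg⟩
end

section
/- Let R be a commutative ring, A an Azumaya algebra over R, and M an R-module. Then the map η : M → Hom_{A-bimod}(A, A ⊗[R] M), sending m to the map a ↦ a ⊗ m, is a well-defined bijection (an isomorphism of R-modules) from M onto the set of A-bimodule homomorphisms from A to A ⊗[R] M. -/
/-!
Since `A` is faithful, finitely generated and projective, Nakayama's lemma shows that its trace
ideal is all of `R`: there are `φₖ : A →ₗ[R] R` and `pₖ : A` with `∑ₖ φₖ pₖ = 1`. Every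
`R`-endomorphism of `A` is a sum of maps `x ↦ a x b`, so an `A`-bimodule map
`ψ : A → A ⊗[R] M` commutes with `f ⊗ id_M` for every `f : A →ₗ[R] A`. Applied to the
rank-one maps `y ↦ φₖ(y) • x`, whose sum is `id`, this gives
`ψ x = x ⊗ₜ ∑ₖ (φₖ ⊗ id_M)(ψ pₖ)`, which inverts `m ↦ (a ↦ a ⊗ₜ m)`.
-/

open TensorProduct MulOpposite

section TraceIdeal

variable {R N : Type*} [CommRing R] [AddCommGroup N] [Module R N]

theorem Module.Projective.top_le_span_dual_apply_smul_top [Module.Projective R N] :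
    (⊤ : Submodule R N) ≤
      Ideal.span (Set.range fun fx : Module.Dual R N × N => fx.1 fx.2) • ⊤ := by
  obtain ⟨s, hs⟩ := Module.projective_def'.mp ‹Module.Projective R N›
  intro x _
  have hx : x = (s x).sum fun y r => r • y := by
    simpa [Finsupp.linearCombination_apply] using (LinearMap.congr_fun hs x).symm
  rw [hx, Finsupp.sum]
  exact Submodule.sum_mem _ fun y _ =>
    Submodule.smul_mem_smul (Ideal.subset_span ⟨((Finsupp.lapply y).comp s, x), rfl⟩) trivial

theorem Module.span_dual_apply_eq_top [Module.Finite R N] [Module.Projective R N]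
    [FaithfulSMul R N] :
    Ideal.span (Set.range fun fx : Module.Dual R N × N => fx.1 fx.2) = ⊤ := by
  obtain ⟨r, hr1, hr0⟩ := Submodule.exists_sub_one_mem_and_smul_eq_zero_of_fg_of_le_smul _ ⊤
    (Module.Finite.fg_top (R := R) (M := N)) Module.Projective.top_le_span_dual_apply_smul_top
  have hr : r = 0 := eq_of_smul_eq_smul fun x : N => by rw [hr0 x trivial, zero_smul]
  rw [Ideal.eq_top_iff_one, ← neg_mem_iff]
  simpa [hr] using hr1

theorem Module.exists_sum_dual_apply_eq_one [Module.Finite R N] [Module.Projective R N]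
    [FaithfulSMul R N] :
    ∃ (n : ℕ) (φ : Fin n → Module.Dual R N) (p : Fin n → N), ∑ k, φ k (p k) = 1 := by
  have h1 : (1 : R) ∈ Ideal.span (Set.range fun fx : Module.Dual R N × N => fx.1 fx.2) := by
    rw [Module.span_dual_apply_eq_top]; trivial
  obtain ⟨n, c, g, hsum⟩ := Submodule.mem_span_set'.mp h1
  choose fx hfx using fun k => (g k).2
  exact ⟨n, fun k => c k • (fx k).1, fun k => (fx k).2, by simpa [hfx] using hsum⟩

end TraceIdeal

section Bimodule

variable {R A M : Type*} [CommRing R] [Ring A] [Algebra R A] [AddCommGroup M] [Module R M]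

theorem rTensor_mulLeftRight_tmul (a : A) (b : Aᵐᵒᵖ) (z : A ⊗[R] M) :
    (mulLeftRight R A (a ⊗ₜ b)).rTensor M z = a • b • z := by
  induction z with
  | zero => simp
  | add z₁ z₂ h₁ h₂ => simp only [map_add, h₁, h₂, smul_add]
  | tmul x m => simp [mulLeftRight, smul_tmul']

theorem AddMonoidHom.map_apply_eq_rTensor_of_surjective_mulLeftRight
    (hA : Function.Surjective (mulLeftRight R A)) (ψ : A →+ A ⊗[R] M)
    (hl : ∀ a x : A, ψ (a * x) = a • ψ x) (hr : ∀ a x : A, ψ (x * a) = MulOpposite.op a • ψ x)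
    (f : A →ₗ[R] A) (x : A) : ψ (f x) = f.rTensor M (ψ x) := by
  obtain ⟨t, rfl⟩ := hA f
  induction t with
  | zero => simp
  | add t₁ t₂ h₁ h₂ => simp only [map_add, LinearMap.add_apply, h₁, h₂, LinearMap.rTensor_add]
  | tmul a b =>
    have hab : mulLeftRight R A (a ⊗ₜ b) x = a * x * b.unop := by
      simp [mulLeftRight, mul_assoc]
    rw [hab, hr, hl, rTensor_mulLeftRight_tmul, op_unop, smul_comm]

end Bimodule

section RankOne

variable {R N M : Type*} [CommRing R] [AddCommGroup N] [Module R N] [AddCommGroup M] [Module R M]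

theorem LinearMap.rTensor_smulRight (f : Module.Dual R N) (x : N) (z : N ⊗[R] M) :
    (f.smulRight x).rTensor M z = x ⊗ₜ TensorProduct.lid R M (f.rTensor M z) := by
  induction z with
  | zero => simp
  | add z₁ z₂ h₁ h₂ => simp only [map_add, h₁, h₂, tmul_add]
  | tmul y m => simp [smul_tmul]

theorem AddMonoidHom.eq_tmul_sum_of_map_apply_eq_rTensor (ψ : N →+ N ⊗[R] M)
    (hψ : ∀ (f : N →ₗ[R] N) (x : N), ψ (f x) = f.rTensor M (ψ x))
    {n : ℕ} {φ : Fin n → Module.Dual R N} {p : Fin n → N} (hφp : ∑ k, φ k (p k) = 1) (x : N) :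
    ψ x = x ⊗ₜ ∑ k, TensorProduct.lid R M ((φ k).rTensor M (ψ (p k))) := by
  have hx : x = ∑ k, (φ k).smulRight x (p k) := by
    simp only [LinearMap.smulRight_apply, ← Finset.sum_smul, hφp, one_smul]
  conv_lhs => rw [hx]
  simp only [map_sum, hψ, LinearMap.rTensor_smulRight, tmul_sum]

theorem sum_lid_rTensor_tmul {n : ℕ} {φ : Fin n → Module.Dual R N} {p : Fin n → N}
    (hφp : ∑ k, φ k (p k) = 1) (m : M) :
    ∑ k, TensorProduct.lid R M ((φ k).rTensor M (p k ⊗ₜ m)) = m := by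
  simp only [LinearMap.rTensor_tmul, TensorProduct.lid_tmul, ← Finset.sum_smul, hφp, one_smul]

end RankOne

/-- The map `η : M → Hom_{A-bimod}(A, A ⊗[R] M)`, `m ↦ (a ↦ a ⊗ m)`, is a well-defined
bijection from `M` onto the set of `A`-bimodule homomorphisms `A → A ⊗[R] M`, i.e. additive
maps commuting with both the left and the right `A`-actions.  Moreover it is `R`-linear. -/
theorem stmt3 (R : Type*) [CommRing R] (A : Type*) [Ring A] [Algebra R A]
    (hA : IsAzumayaAlg R A) (M : Type*) [AddCommGroup M] [Module R M] :
    ∃ e : M ≃ {ψ : A →+ A ⊗[R] M //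
        (∀ a x : A, ψ (a * x) = a • ψ x) ∧ (∀ a x : A, ψ (x * a) = op a • ψ x)},
      (∀ (m : M) (a : A), (e m : A →+ A ⊗[R] M) a = a ⊗ₜ[R] m) ∧
      (∀ m m' : M, ((e (m + m') : A →+ A ⊗[R] M) : A → A ⊗[R] M) =
        fun a => (e m : A →+ A ⊗[R] M) a + (e m' : A →+ A ⊗[R] M) a) ∧
      (∀ (r : R) (m : M), ((e (r • m) : A →+ A ⊗[R] M) : A → A ⊗[R] M) =
        fun a => r • (e m : A →+ A ⊗[R] M) a) := by
  have := hA.finite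
  have := hA.projective
  have := hA.faithful
  obtain ⟨n, φ, p, hφp⟩ := Module.exists_sum_dual_apply_eq_one (R := R) (N := A)
  refine ⟨{ toFun m := ⟨((TensorProduct.mk R A M).flip m).toAddMonoidHom,
              fun a x => (smul_tmul' a x m).symm, fun a x => (smul_tmul' (op a) x m).symm⟩
            invFun ψ := ∑ k, TensorProduct.lid R M ((φ k).rTensor M (ψ.1 (p k)))
            left_inv := sum_lid_rTensor_tmul hφp
            right_inv ψ := Subtype.ext <| AddMonoidHom.ext fun x =>
              (ψ.1.eq_tmul_sum_of_map_apply_eq_rTensor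
                (ψ.1.map_apply_eq_rTensor_of_surjective_mulLeftRight hA.bij.2 ψ.2.1 ψ.2.2)
                hφp x).symm },
    fun _ _ => rfl, fun m m' => funext fun a => tmul_add a m m',
    fun r m => funext fun a => tmul_smul r a m⟩
end

section
/- Let R be a commutative ring, A an Azumaya algebra over R, and M an R-module. The functor T_M = (- ⊗[R] M) on the category of right A-modules is naturally isomorphic to the identity functor if and only if M is isomorphic to R as an R-module. -/
open TensorProduct MulOpposite

universe u

/-! A natural isomorphism `ε : id ≅ - ⊗[R] M` gives on `A` itself an `Aᵐᵒᵖ`-linear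
isomorphism `q : A ≃ A ⊗[R] M` commuting with left multiplications, hence, since
`A ⊗ Aᵐᵒᵖ → End_R(A)` is onto, with every `R`-endomorphism of `A`. Testing against the
endomorphisms `x ↦ g x • a` (`g` a linear form) and using that the trace ideal of the faithful
finitely generated projective module `A` is all of `R`, one finds `q x = x ⊗ m₀`, and then
`r ↦ r • m₀` is an isomorphism `R ≃ M`. Conversely `M ≃ R` gives `N ≃ N ⊗[R] R ≃ N ⊗[R] M`
naturally in `N`. -/

open Module

section

variable {R : Type*} [CommRing R] {P : Type*} [AddCommGroup P] [Module R P]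
  {M : Type*} [AddCommGroup M] [Module R M]

theorem Module.exists_sum_dual_apply_eq_one_s9 [Module.Finite R P] [Module.Projective R P]
    [FaithfulSMul R P] :
    ∃ (n : ℕ) (f : Fin n → Dual R P) (c : Fin n → P), ∑ i, f i (c i) = 1 := by
  obtain ⟨n, π, hπ⟩ := Module.Finite.exists_fin' R P
  obtain ⟨s, hs⟩ :=
    LinearMap.exists_rightInverse_of_surjective π (LinearMap.range_eq_top.2 hπ)
  let f : Fin n → Dual R P := fun i => LinearMap.proj i ∘ₗ s
  let F : (Fin n → P) →ₗ[R] R := LinearMap.lsum R (fun _ => P) R f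
  -- `range F` is the trace ideal of `P`; the dual basis formula gives `(range F) • P = P`, so by
  -- Nakayama some `r` with `r - 1 ∈ range F` kills `P`, and faithfulness forces `r = 0`.
  have h_top : (⊤ : Submodule R P) ≤ LinearMap.range F • ⊤ := by
    intro x _
    have hx : x = ∑ i, f i x • π (fun j => if i = j then 1 else 0) := by
      conv_lhs => rw [← LinearMap.id_apply (R := R) x, ← hs, LinearMap.comp_apply,
        LinearMap.pi_apply_eq_sum_univ]
      rfl
    rw [hx]
    refine Submodule.sum_mem _ fun i _ => Submodule.smul_mem_smul ⟨Pi.single i x, ?_⟩ trivial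
    simp [F, Pi.single_apply, apply_ite]
  obtain ⟨r, hr1, hr0⟩ := Submodule.exists_sub_one_mem_and_smul_eq_zero_of_fg_of_le_smul _ ⊤
    Module.Finite.fg_top h_top
  have hr : r = 0 := FaithfulSMul.eq_of_smul_eq_smul fun x : P => by rw [hr0 x trivial, zero_smul]
  obtain ⟨c, hc⟩ : (1 : R) ∈ LinearMap.range F := by simpa [hr] using neg_mem hr1
  exact ⟨n, f, c, by simpa [F] using hc⟩

theorem LinearMap.rTensor_smulRight_s9 (g : Module.Dual R P) (a : P) :
    (g.smulRight a).rTensor M =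
      TensorProduct.mk R P M a ∘ₗ (TensorProduct.lid R M).toLinearMap ∘ₗ g.rTensor M := by
  ext x m
  simp [TensorProduct.smul_tmul]

theorem Module.exists_eq_tmul_of_comp_eq_rTensor_comp [Module.Finite R P]
    [Module.Projective R P] [FaithfulSMul R P] (q : P →ₗ[R] P ⊗[R] M)
    (hq : ∀ φ : Module.End R P, q ∘ₗ φ = φ.rTensor M ∘ₗ q) :
    ∃ m₀ : M, ∀ x, q x = x ⊗ₜ m₀ := by
  obtain ⟨n, f, c, hfc⟩ := exists_sum_dual_apply_eq_one_s9 (R := R) (P := P)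
  have key (g : Dual R P) (x y : P) :
      g y • q x = x ⊗ₜ TensorProduct.lid R M (g.rTensor M (q y)) := by
    simpa [LinearMap.rTensor_smulRight_s9] using LinearMap.congr_fun (hq (g.smulRight x)) y
  refine ⟨∑ i, TensorProduct.lid R M ((f i).rTensor M (q (c i))), fun x => ?_⟩
  calc q x = ∑ i, f i (c i) • q x := by rw [← Finset.sum_smul, hfc, one_smul]
    _ = _ := by simp only [key, TensorProduct.tmul_sum]

theorem Module.nonempty_linearEquiv_of_comp_eq_rTensor_comp [Module.Finite R P]
    [Module.Projective R P] [FaithfulSMul R P] (q : P ≃ₗ[R] P ⊗[R] M)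
    (hq : ∀ φ : Module.End R P, q.toLinearMap ∘ₗ φ = φ.rTensor M ∘ₗ q) :
    Nonempty (M ≃ₗ[R] R) := by
  obtain ⟨m₀, hm₀⟩ := exists_eq_tmul_of_comp_eq_rTensor_comp q.toLinearMap hq
  replace hm₀ : ∀ x, q x = x ⊗ₜ m₀ := hm₀
  obtain ⟨n, f, c, hfc⟩ := exists_sum_dual_apply_eq_one_s9 (R := R) (P := P)
  refine
    ⟨(LinearEquiv.ofBijective (LinearMap.toSpanSingleton R M m₀) ⟨?_, fun m => ?_⟩).symm⟩
  · refine (injective_iff_map_eq_zero _).2 fun r hr =>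
      FaithfulSMul.eq_of_smul_eq_smul fun x : P => ?_
    have : q (r • x) = 0 := by
      rw [map_smul, hm₀, ← TensorProduct.tmul_smul, ← LinearMap.toSpanSingleton_apply, hr,
        TensorProduct.tmul_zero]
    rw [zero_smul, q.map_eq_zero_iff.1 this]
  · have key (i : Fin n) : f i (c i) • m = f i (q.symm (c i ⊗ₜ m)) • m₀ := by
      simpa using congrArg (TensorProduct.lid R M ∘ (f i).rTensor M)
        ((q.apply_symm_apply (c i ⊗ₜ m)).symm.trans (hm₀ _))
    refine ⟨∑ i, f i (q.symm (c i ⊗ₜ m)), ?_⟩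
    rw [LinearMap.toSpanSingleton_apply, Finset.sum_smul]
    simp_rw [← key]
    rw [← Finset.sum_smul, hfc, one_smul]

end

section

variable {R : Type*} [CommRing R] {A : Type*} [Ring A] [Algebra R A]
  {M : Type*} [AddCommGroup M] [Module R M]

theorem rTensor_mulRight_unop (b : Aᵐᵒᵖ) (y : A ⊗[R] M) :
    (LinearMap.mulRight R b.unop).rTensor M y = b • y := by
  induction y using TensorProduct.induction_on with
  | zero => simp
  | tmul x m => simp [TensorProduct.smul_tmul', MulOpposite.smul_eq_mul_unop]
  | add y z hy hz => simp [hy, hz]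

theorem IsAzumayaAlg.comp_eq_rTensor_comp (hA : IsAzumayaAlg R A)
    (q : A →ₗ[Aᵐᵒᵖ] A ⊗[R] M)
    (hq : ∀ a x, q (a * x) = (LinearMap.mulLeft R a).rTensor M (q x)) (φ : Module.End R A) :
    q.restrictScalars R ∘ₗ φ = φ.rTensor M ∘ₗ q.restrictScalars R := by
  obtain ⟨t, rfl⟩ := hA.bij.2 φ
  induction t using TensorProduct.induction_on with
  | zero => simp
  | tmul a b =>
    have hleft : q.restrictScalars R ∘ₗ LinearMap.mulLeft R a =
        (LinearMap.mulLeft R a).rTensor M ∘ₗ q.restrictScalars R := LinearMap.ext (hq a)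
    have hright : q.restrictScalars R ∘ₗ LinearMap.mulRight R b.unop =
        (LinearMap.mulRight R b.unop).rTensor M ∘ₗ q.restrictScalars R := by
      ext x
      simp [rTensor_mulRight_unop, ← map_smul, MulOpposite.smul_eq_mul_unop]
    have hmul : mulLeftRight R A (a ⊗ₜ b) =
        LinearMap.mulLeft R a ∘ₗ LinearMap.mulRight R b.unop := by
      simp [mulLeftRight]
    rw [hmul, LinearMap.rTensor_comp, ← LinearMap.comp_assoc, hleft, LinearMap.comp_assoc, hright,
      LinearMap.comp_assoc]
  | add s t hs ht =>
    rw [map_add, LinearMap.comp_add, hs, ht, LinearMap.rTensor_add, LinearMap.add_comp]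

noncomputable def tensorEquivOfEquivRing {S : Type*} [Semiring S] [Algebra R S]
    (e : M ≃ₗ[R] R) (N : Type*) [AddCommGroup N] [Module R N] [Module S N]
    [IsScalarTower R S N] :
    N ≃ₗ[S] N ⊗[R] M :=
  ((TensorProduct.AlgebraTensorModule.congr (LinearEquiv.refl S N) e).trans
    (TensorProduct.AlgebraTensorModule.rid R S N)).symm

@[simp]
theorem tensorEquivOfEquivRing_apply {S : Type*} [Semiring S] [Algebra R S]
    (e : M ≃ₗ[R] R) (N : Type*) [AddCommGroup N] [Module R N] [Module S N]
    [IsScalarTower R S N] (n : N) :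
    tensorEquivOfEquivRing (S := S) e N n = n ⊗ₜ e.symm 1 := by
  simp [tensorEquivOfEquivRing]

end

/-- Right `A`-modules are modelled as `Aᵐᵒᵖ`-modules whose `R`-action factors through `Aᵐᵒᵖ`. -/
theorem stmt9 (R : Type u) [CommRing R] (A : Type u) [Ring A] [Algebra R A]
    (hA : IsAzumayaAlg R A) (M : Type u) [AddCommGroup M] [Module R M] :
    (∃ ε : ∀ (N : Type u) [AddCommGroup N] [Module R N] [Module Aᵐᵒᵖ N]
        [IsScalarTower R Aᵐᵒᵖ N], N ≃ₗ[Aᵐᵒᵖ] N ⊗[R] M,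
      ∀ (N : Type u) [AddCommGroup N] [Module R N] [Module Aᵐᵒᵖ N] [IsScalarTower R Aᵐᵒᵖ N]
        (N' : Type u) [AddCommGroup N'] [Module R N'] [Module Aᵐᵒᵖ N']
        [IsScalarTower R Aᵐᵒᵖ N'] (f : N →ₗ[Aᵐᵒᵖ] N') (n : N),
        ε N' (f n) = LinearMap.rTensor M (f.restrictScalars R) (ε N n)) ↔
    Nonempty (M ≃ₗ[R] R) := by
  constructor
  · rintro ⟨ε, hε⟩
    have := hA.finite
    have := hA.projective
    have := hA.faithful
    have hq_mulLeft (a x : A) : ε A (a * x) = (LinearMap.mulLeft R a).rTensor M (ε A x) :=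
      hε A A (RingEquiv.moduleEndSelfOp A a) x
    exact nonempty_linearEquiv_of_comp_eq_rTensor_comp ((ε A).restrictScalars R)
      (hA.comp_eq_rTensor_comp (ε A).toLinearMap hq_mulLeft)
  · rintro ⟨e⟩
    exact ⟨fun N _ _ _ _ => tensorEquivOfEquivRing e N, fun N _ _ _ _ N' _ _ _ _ f n => by simp⟩
end
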